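/- arXiv:2302.13456 — 5 statements merged into one kernel-verified Lean document; each statement's English description precedes it below -/
import Mathlib

section
/- For the domain D(α) = {(z,w) ∈ ℂ² : | |w|² − |z|² | < (1+|z|²+|w|²)^{−α}} with 2 < α < 3, the function z is square-integrable on D(α); in particular ∫_{D(α)} |z|² dV ≤ 2π²/(α−2) up to the estimate ∫₀^∞ r(1+r)^{−α} dr < ∫₀^∞ (1+r)^{1−α} dr = 1/(α−2). -/
open MeasureTheory Real

/-- The domain `D(α) = {(z,w) ∈ ℂ² : | |w|² − |z|² | < (1+|z|²+|w|²)^{−α}}`. -/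
def HuangLiDomain (α : ℝ) : Set (ℂ × ℂ) :=
  {p : ℂ × ℂ | |‖p.2‖ ^ 2 - ‖p.1‖ ^ 2| < (1 + ‖p.1‖ ^ 2 + ‖p.2‖ ^ 2) ^ (-α)}

/-!
Integrate over `w` first. For fixed `z` the fibre of `D(α)` lies in the annulus
`| |w|² − |z|² | < (1+|z|²)^{−α}`, of area at most `2π (1+|z|²)^{−α}`, so
`∫_{D(α)} |z|² ≤ 2π ∫_ℂ |z|² (1+|z|²)^{−α}`. Polar coordinates and `s = |z|²` turn the right-hand
side into `2π² ∫₀^∞ s (1+s)^{−α} ds`, and writing `s = (1+s) − 1` gives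
`∫₀^∞ s (1+s)^{−α} ds = 1/(α−2) − 1/(α−1)`.
-/

open Set Filter Topology
open scoped ENNReal

lemma integrableOn_Ioi_one_add_rpow {p : ℝ} (hp : p < -1) :
    IntegrableOn (fun r : ℝ => (1 + r) ^ p) (Ioi 0) := by
  simpa only [add_comm] using integrableOn_add_rpow_Ioi_of_lt hp (by norm_num : -(1 : ℝ) < 0)

lemma integral_Ioi_one_add_rpow {p : ℝ} (hp : p < -1) :
    ∫ r in Ioi (0 : ℝ), (1 + r) ^ p = -1 / (p + 1) := by
  have hderiv : ∀ x ∈ Ici (0 : ℝ),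
      HasDerivAt (fun t => (1 + t) ^ (p + 1) / (p + 1)) ((1 + x) ^ p) x := by
    intro x hx
    have h := (((hasDerivAt_id' x).const_add 1).rpow_const (p := p + 1)
      (Or.inl (by linarith [mem_Ici.mp hx]))).div_const (p + 1)
    rwa [add_sub_cancel_right, one_mul, mul_div_cancel_left₀ _ (by linarith)] at h
  have hlim : Tendsto (fun t : ℝ => (1 + t) ^ (p + 1) / (p + 1)) atTop (𝓝 (0 / (p + 1))) := by
    rw [← neg_neg (p + 1)]
    exact (tendsto_rpow_neg_atTop (by linarith)).comp
      (tendsto_atTop_add_const_left _ 1 tendsto_id) |>.div_const _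
  rw [integral_Ioi_of_hasDerivAt_of_tendsto' hderiv (integrableOn_Ioi_one_add_rpow hp) hlim]
  simp [neg_div]

lemma integral_Ioi_mul_one_add_rpow_neg {α : ℝ} (hα : 2 < α) :
    ∫ r in Ioi (0 : ℝ), r * (1 + r) ^ (-α) = 1 / (α - 2) - 1 / (α - 1) := by
  have hsplit : ∀ r ∈ Ioi (0 : ℝ), r * (1 + r) ^ (-α) = (1 + r) ^ (1 - α) - (1 + r) ^ (-α) := by
    intro r hr
    rw [sub_eq_add_neg 1 α, rpow_add (by linarith [mem_Ioi.mp hr]), rpow_one]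
    ring
  rw [setIntegral_congr_fun measurableSet_Ioi hsplit,
    integral_sub (integrableOn_Ioi_one_add_rpow (by linarith))
      (integrableOn_Ioi_one_add_rpow (by linarith)),
    integral_Ioi_one_add_rpow (by linarith), integral_Ioi_one_add_rpow (by linarith)]
  have h1 : α - 1 ≠ 0 := by linarith
  have h2 : α - 2 ≠ 0 := by linarith
  rw [show 1 - α + 1 = -(α - 2) by ring, show -α + 1 = -(α - 1) by ring]
  field_simp

lemma isOpen_huangLiDomain (α : ℝ) : IsOpen (HuangLiDomain α) := by
  refine isOpen_lt (by fun_prop) (Continuous.rpow_const (by fun_prop) fun p => Or.inl ?_)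
  positivity

lemma volume_setOf_abs_norm_sq_sub_lt_le {a ε : ℝ} (ha : 0 ≤ a) (hε : 0 ≤ ε) :
    volume {w : ℂ | |‖w‖ ^ 2 - a| < ε} ≤ ENNReal.ofReal (2 * π * ε) := by
  set m := max (a - ε) 0
  have hm : m ≤ a + ε := max_le (by linarith) (by positivity)
  have hsqrt : ∀ {t : ℝ}, 0 ≤ t → ENNReal.ofReal √t ^ 2 = ENNReal.ofReal t := fun ht => by
    rw [← ENNReal.ofReal_pow (sqrt_nonneg _), sq_sqrt ht]
  have hnorm : ∀ w : ℂ, ‖w‖ = √(‖w‖ ^ 2) := fun w => (sqrt_sq (norm_nonneg w)).symm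
  have hannulus : {w : ℂ | |‖w‖ ^ 2 - a| < ε} ⊆
      Metric.ball 0 √(a + ε) \ Metric.ball 0 √m := by
    intro w hw
    rw [mem_ofPred_eq, abs_lt] at hw
    simp only [Set.mem_sdiff, Metric.mem_ball, dist_zero_right, not_lt]
    rw [hnorm w]
    exact ⟨sqrt_lt_sqrt (by positivity) (by linarith),
      sqrt_le_sqrt (max_le (by linarith) (by positivity))⟩
  have hinner : Metric.ball (0 : ℂ) √m ⊆ Metric.ball 0 √(a + ε) :=
    Metric.ball_subset_ball (sqrt_le_sqrt hm)
  calc volume {w : ℂ | |‖w‖ ^ 2 - a| < ε}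
      ≤ volume (Metric.ball (0 : ℂ) √(a + ε)) - volume (Metric.ball (0 : ℂ) √m) := by
        rw [← measure_sdiff hinner measurableSet_ball.nullMeasurableSet measure_ball_lt_top.ne]
        exact measure_mono hannulus
    _ = ENNReal.ofReal ((a + ε - m) * π) := by
        rw [Complex.volume_ball, Complex.volume_ball, hsqrt (by positivity),
          hsqrt (le_max_right _ _), ← ENNReal.sub_mul fun _ _ => ENNReal.coe_ne_top,
          ← ENNReal.ofReal_sub _ (le_max_right _ _), ← ENNReal.ofReal_coe_nnreal,
          NNReal.coe_real_pi, ← ENNReal.ofReal_mul (sub_nonneg.mpr hm)]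
    _ ≤ ENNReal.ofReal (2 * π * ε) := by
        refine ENNReal.ofReal_le_ofReal ?_
        nlinarith [le_max_left (a - ε) 0, pi_pos]

lemma huangLiDomain_fiber_subset {α : ℝ} (hα : 0 ≤ α) (z : ℂ) :
    Prod.mk z ⁻¹' HuangLiDomain α ⊆ {w : ℂ | |‖w‖ ^ 2 - ‖z‖ ^ 2| < (1 + ‖z‖ ^ 2) ^ (-α)} := by
  intro w hw
  refine lt_of_lt_of_le hw (rpow_le_rpow_of_nonpos (by positivity) ?_ (by linarith))
  nlinarith [sq_nonneg ‖w‖]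

lemma setLIntegral_comp_fst {X Y : Type*} [MeasurableSpace X] [MeasurableSpace Y]
    {μ : Measure X} {ν : Measure Y} [SFinite ν] {s : Set (X × Y)} (hs : MeasurableSet s)
    {f : X → ℝ≥0∞} (hf : Measurable f) :
    ∫⁻ p in s, f p.1 ∂μ.prod ν = ∫⁻ x, f x * ν (Prod.mk x ⁻¹' s) ∂μ := by
  have hmeas : Measurable fun p : X × Y => f p.1 := hf.comp measurable_fst
  rw [← lintegral_indicator hs, lintegral_prod _ (hmeas.indicator hs).aemeasurable]
  congr 1 with x
  rw [← lintegral_indicator_const (measurable_prodMk_left hs)]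
  rfl

lemma integral_norm_sq_mul_one_add_norm_sq_rpow (α : ℝ) :
    ∫ z : ℂ, ‖z‖ ^ 2 * (1 + ‖z‖ ^ 2) ^ (-α) = π * ∫ s in Ioi (0 : ℝ), s * (1 + s) ^ (-α) := by
  rw [integral_fun_norm_addHaar volume (fun r : ℝ => r ^ 2 * (1 + r ^ 2) ^ (-α)),
    Complex.finrank_real_complex, measureReal_def, Complex.volume_ball]
  simp only [ENNReal.ofReal_one, one_pow, one_mul, ENNReal.coe_toReal, NNReal.coe_real_pi,
    nsmul_eq_mul, smul_eq_mul]
  rw [← integral_comp_rpow_Ioi (fun s : ℝ => s * (1 + s) ^ (-α)) two_ne_zero, mul_left_comm,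
    ← integral_const_mul]
  refine congrArg _ (setIntegral_congr_fun measurableSet_Ioi fun r _ => ?_)
  norm_num
  ring

lemma integrable_norm_sq_mul_one_add_norm_sq_rpow {α : ℝ} (hα : 2 < α) :
    Integrable fun z : ℂ => ‖z‖ ^ 2 * (1 + ‖z‖ ^ 2) ^ (-α) := by
  have hdim : (Module.finrank ℝ ℂ : ℝ) < 2 * α - 2 := by
    rw [Complex.finrank_real_complex]; push_cast; linarith
  refine (integrable_rpow_neg_one_add_norm_sq hdim).mono' (by fun_prop)
    (Eventually.of_forall fun z => ?_)
  rw [norm_of_nonneg (by positivity), show -(2 * α - 2) / 2 = 1 + -α by ring,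
    rpow_add (by positivity), rpow_one]
  gcongr
  linarith

lemma lintegral_norm_sq_fst_huangLiDomain_le {α : ℝ} (hα : 2 < α) :
    ∫⁻ p in HuangLiDomain α, ENNReal.ofReal (‖p.1‖ ^ 2) ≤
      ENNReal.ofReal (2 * π ^ 2 * (1 / (α - 2) - 1 / (α - 1))) := by
  have hfiber (z : ℂ) : ENNReal.ofReal (‖z‖ ^ 2) * volume (Prod.mk z ⁻¹' HuangLiDomain α) ≤
      ENNReal.ofReal (2 * π * (‖z‖ ^ 2 * (1 + ‖z‖ ^ 2) ^ (-α))) := by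
    calc ENNReal.ofReal (‖z‖ ^ 2) * volume (Prod.mk z ⁻¹' HuangLiDomain α)
        ≤ ENNReal.ofReal (‖z‖ ^ 2) * ENNReal.ofReal (2 * π * (1 + ‖z‖ ^ 2) ^ (-α)) := by
          gcongr
          exact (measure_mono (huangLiDomain_fiber_subset (by linarith) z)).trans
            (volume_setOf_abs_norm_sq_sub_lt_le (by positivity) (by positivity))
      _ = ENNReal.ofReal (2 * π * (‖z‖ ^ 2 * (1 + ‖z‖ ^ 2) ^ (-α))) := by
          rw [← ENNReal.ofReal_mul (by positivity)]
          ring_nf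
  rw [Measure.volume_eq_prod,
    setLIntegral_comp_fst (f := fun z : ℂ => ENNReal.ofReal (‖z‖ ^ 2))
      (isOpen_huangLiDomain α).measurableSet (by fun_prop)]
  calc ∫⁻ z, ENNReal.ofReal (‖z‖ ^ 2) * volume (Prod.mk z ⁻¹' HuangLiDomain α)
      ≤ ∫⁻ z, ENNReal.ofReal (2 * π * (‖z‖ ^ 2 * (1 + ‖z‖ ^ 2) ^ (-α))) :=
        lintegral_mono hfiber
    _ = ENNReal.ofReal (∫ z : ℂ, 2 * π * (‖z‖ ^ 2 * (1 + ‖z‖ ^ 2) ^ (-α))) :=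
        (ofReal_integral_eq_lintegral_ofReal
          ((integrable_norm_sq_mul_one_add_norm_sq_rpow hα).const_mul _)
          (ae_of_all _ fun z => by positivity)).symm
    _ = ENNReal.ofReal (2 * π ^ 2 * (1 / (α - 2) - 1 / (α - 1))) := by
        rw [integral_const_mul, integral_norm_sq_mul_one_add_norm_sq_rpow,
          integral_Ioi_mul_one_add_rpow_neg hα]
        ring_nf

lemma integrable_and_integral_le_of_lintegral_ofReal_le {X : Type*} [MeasurableSpace X]
    {μ : Measure X} {f : X → ℝ} (hf : AEStronglyMeasurable f μ) (hf0 : 0 ≤ᵐ[μ] f)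
    {B : ℝ} (hB : 0 ≤ B) (h : ∫⁻ x, ENNReal.ofReal (f x) ∂μ ≤ ENNReal.ofReal B) :
    Integrable f μ ∧ ∫ x, f x ∂μ ≤ B := by
  refine ⟨⟨hf, (hasFiniteIntegral_iff_ofReal hf0).mpr (h.trans_lt ENNReal.ofReal_lt_top)⟩, ?_⟩
  rw [integral_eq_lintegral_of_nonneg_ae hf0 hf]
  exact ENNReal.toReal_le_of_le_ofReal hB h

theorem stmt0_general (α : ℝ) (hα1 : 2 < α) :
    IntegrableOn (fun p : ℂ × ℂ => ‖p.1‖ ^ 2) (HuangLiDomain α) volume ∧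
    (∫ p in HuangLiDomain α, ‖p.1‖ ^ 2) ≤ 2 * π ^ 2 / (α - 2) ∧
    (∫ r in Set.Ioi (0 : ℝ), r * (1 + r) ^ (-α)) <
      (∫ r in Set.Ioi (0 : ℝ), (1 + r) ^ (1 - α)) ∧
    (∫ r in Set.Ioi (0 : ℝ), (1 + r) ^ (1 - α)) = 1 / (α - 2) := by
  have hlinear : ∫ r in Ioi (0 : ℝ), (1 + r) ^ (1 - α) = 1 / (α - 2) := by
    rw [integral_Ioi_one_add_rpow (by linarith), show 1 - α + 1 = -(α - 2) by ring, div_neg,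
      neg_div, neg_neg]
  have hquadratic := integral_Ioi_mul_one_add_rpow_neg hα1
  have hpos : 0 < 1 / (α - 1) := one_div_pos.mpr (by linarith)
  have hgap : 1 / (α - 1) < 1 / (α - 2) := one_div_lt_one_div_of_lt (by linarith) (by linarith)
  obtain ⟨hint, hle⟩ := integrable_and_integral_le_of_lintegral_ofReal_le (by fun_prop)
    (ae_of_all _ fun p => by positivity) (by have := sub_pos.mpr hgap; positivity)
    (lintegral_norm_sq_fst_huangLiDomain_le hα1)
  refine ⟨hint, hle.trans ?_, by linarith, hlinear⟩
  calc 2 * π ^ 2 * (1 / (α - 2) - 1 / (α - 1)) ≤ 2 * π ^ 2 * (1 / (α - 2)) := by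
        gcongr; linarith
    _ = 2 * π ^ 2 / (α - 2) := mul_one_div _ _

/-- For `2 < α < 3`, the coordinate function `z` is square integrable on `D(α)`,
and `∫_{D(α)} |z|² dV ≤ 2π²/(α−2)`; moreover the underlying one–dimensional estimate
`∫₀^∞ r (1+r)^{−α} dr < ∫₀^∞ (1+r)^{1−α} dr = 1/(α−2)` holds. -/
theorem stmt0 (α : ℝ) (hα1 : 2 < α) (hα2 : α < 3) :
    IntegrableOn (fun p : ℂ × ℂ => ‖p.1‖ ^ 2) (HuangLiDomain α) volume ∧
    (∫ p in HuangLiDomain α, ‖p.1‖ ^ 2) ≤ 2 * π ^ 2 / (α - 2) ∧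
    (∫ r in Set.Ioi (0 : ℝ), r * (1 + r) ^ (-α)) <
      (∫ r in Set.Ioi (0 : ℝ), (1 + r) ^ (1 - α)) ∧
    (∫ r in Set.Ioi (0 : ℝ), (1 + r) ^ (1 - α)) = 1 / (α - 2) :=
  stmt0_general α hα1
end

section
/- For the domain D(α) with 2 < α < 3, any monomial z^p w^q with p + q ≥ 2 fails to be square-integrable on D(α), i.e. ∫_{D(α)} |z^p w^q|² dV = +∞. -/
/-! Over the annulus `t ≤ |z|² < 2t`, the slab `|z|² ≤ |w|² < |z|² + (6t)^{-α}` lies in `D(α)`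
for `t ≥ 1`. Its volume is `π² t (6t)^{-α}` and `|z^p w^q|² ≥ t^{p+q}` on it, so the integral
is at least `π² 6^{-α} t^{p+q+1-α}`, which is unbounded in `t` because `α < 3 ≤ p + q + 1`. -/

open MeasureTheory Real

open Filter Topology

def sqAnnulus (a e : ℝ) : Set ℂ := {w | a ≤ ‖w‖ ^ 2 ∧ ‖w‖ ^ 2 < a + e}

lemma measurableSet_sqAnnulus (a e : ℝ) : MeasurableSet (sqAnnulus a e) :=
  (measurableSet_le measurable_const (measurable_norm.pow_const 2)).inter
    (measurableSet_lt (measurable_norm.pow_const 2) measurable_const)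

lemma sqAnnulus_eq_ball_sdiff_ball (a e : ℝ) :
    sqAnnulus a e = Metric.ball 0 √(a + e) \ Metric.ball 0 √a := by
  ext w
  simp only [sqAnnulus, Set.mem_ofPred_eq, Set.mem_sdiff, mem_ball_zero_iff, not_lt,
    Real.lt_sqrt (norm_nonneg w)]
  tauto

lemma volume_sqAnnulus {a e : ℝ} (ha : 0 ≤ a) (he : 0 ≤ e) :
    volume (sqAnnulus a e) = ENNReal.ofReal (π * e) := by
  rw [sqAnnulus_eq_ball_sdiff_ball, measure_sdiff (Metric.ball_subset_ball
    (Real.sqrt_le_sqrt (by linarith))) measurableSet_ball.nullMeasurableSet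
    measure_ball_lt_top.ne, Complex.volume_ball, Complex.volume_ball,
    ← ENNReal.ofReal_pow (Real.sqrt_nonneg _), Real.sq_sqrt (by positivity),
    ← ENNReal.ofReal_pow (Real.sqrt_nonneg _), Real.sq_sqrt ha,
    ← ENNReal.sub_mul fun _ _ => ENNReal.coe_ne_top, ENNReal.ofReal_add ha he,
    ENNReal.add_sub_cancel_left ENNReal.ofReal_ne_top, ← ENNReal.ofReal_coe_nnreal,
    NNReal.coe_real_pi, ← ENNReal.ofReal_mul he, mul_comm]

def sqShell (A : Set ℂ) (e : ℝ) : Set (ℂ × ℂ) := {x | x.1 ∈ A ∧ x.2 ∈ sqAnnulus (‖x.1‖ ^ 2) e}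

lemma measurableSet_sqShell {A : Set ℂ} (hA : MeasurableSet A) (e : ℝ) :
    MeasurableSet (sqShell A e) := by
  unfold sqShell sqAnnulus
  measurability

lemma volume_sqShell {A : Set ℂ} (hA : MeasurableSet A) {e : ℝ} (he : 0 ≤ e) :
    volume (sqShell A e) = ENNReal.ofReal (π * e) * volume A := by
  have hfiber : ∀ z : ℂ, volume (Prod.mk z ⁻¹' sqShell A e) =
      A.indicator (fun _ => ENNReal.ofReal (π * e)) z := by
    intro z
    by_cases hz : z ∈ A
    · simp [sqShell, hz, volume_sqAnnulus (sq_nonneg ‖z‖) he]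
    · simp [sqShell, hz]
  rw [Measure.volume_eq_prod, Measure.prod_apply (measurableSet_sqShell hA e)]
  simp_rw [hfiber]
  exact lintegral_indicator_const hA _

lemma pow_le_sq_norm_mul_pow {t : ℝ} (ht : 0 ≤ t) {z w : ℂ} (hz : t ≤ ‖z‖ ^ 2)
    (hw : t ≤ ‖w‖ ^ 2) (p q : ℕ) : t ^ (p + q) ≤ ‖z ^ p * w ^ q‖ ^ 2 := by
  rw [norm_mul, norm_pow, norm_pow, mul_pow, ← pow_mul, ← pow_mul, mul_comm p, mul_comm q,
    pow_mul, pow_mul, pow_add]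
  gcongr

lemma sqShell_subset_huangLiDomain {α t : ℝ} (hα : 0 ≤ α) (ht : 1 ≤ t) :
    sqShell (sqAnnulus t t) ((6 * t) ^ (-α)) ⊆ HuangLiDomain α := by
  rintro ⟨z, w⟩ ⟨⟨-, hz⟩, hzw, hw⟩
  have hε : (6 * t) ^ (-α) ≤ 1 :=
    Real.rpow_le_one_of_one_le_of_nonpos (by linarith) (neg_nonpos.2 hα)
  have hε' : (6 * t) ^ (-α) ≤ (1 + ‖z‖ ^ 2 + ‖w‖ ^ 2) ^ (-α) :=
    Real.rpow_le_rpow_of_nonpos (by positivity) (by linarith) (neg_nonpos.2 hα)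
  show |‖w‖ ^ 2 - ‖z‖ ^ 2| < (1 + ‖z‖ ^ 2 + ‖w‖ ^ 2) ^ (-α)
  rw [abs_of_nonneg (by linarith)]
  linarith

lemma le_setLIntegral_sq_norm_mul_pow_huangLiDomain {α t : ℝ} (hα : 0 ≤ α) (ht : 1 ≤ t)
    (p q : ℕ) :
    ENNReal.ofReal (π ^ 2 * 6 ^ (-α) * t ^ (((p + q : ℕ) : ℝ) + 1 - α)) ≤
      ∫⁻ x in HuangLiDomain α, ENNReal.ofReal (‖x.1 ^ p * x.2 ^ q‖ ^ 2) := by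
  have ht0 : 0 < t := by linarith
  set S := sqShell (sqAnnulus t t) ((6 * t) ^ (-α))
  have hS : MeasurableSet S := measurableSet_sqShell (measurableSet_sqAnnulus t t) _
  calc ENNReal.ofReal (π ^ 2 * 6 ^ (-α) * t ^ (((p + q : ℕ) : ℝ) + 1 - α))
      = ENNReal.ofReal (t ^ (p + q)) * volume S := by
        rw [volume_sqShell (measurableSet_sqAnnulus t t) (by positivity),
          volume_sqAnnulus ht0.le ht0.le, ← ENNReal.ofReal_mul (by positivity),
          ← ENNReal.ofReal_mul (by positivity), sub_eq_add_neg, Real.rpow_add ht0,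
          Real.rpow_add ht0, Real.rpow_natCast, Real.rpow_one,
          Real.mul_rpow (by norm_num) ht0.le]
        ring_nf
    _ ≤ ∫⁻ x in S, ENNReal.ofReal (‖x.1 ^ p * x.2 ^ q‖ ^ 2) := by
        rw [← setLIntegral_const]
        refine setLIntegral_mono' hS fun x ⟨⟨hz, _⟩, hzw, _⟩ ↦ ENNReal.ofReal_le_ofReal ?_
        exact pow_le_sq_norm_mul_pow ht0.le hz (hz.trans hzw) p q
    _ ≤ _ := lintegral_mono_set (sqShell_subset_huangLiDomain hα ht)

/-- For `2 < α < 3`, any monomial `z^p w^q` with `p + q ≥ 2` fails to be square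
integrable on `D(α)`: `∫_{D(α)} |z^p w^q|² dV = +∞`. -/
theorem stmt1 (α : ℝ) (hα1 : 2 < α) (hα2 : α < 3) (p q : ℕ) (hpq : 2 ≤ p + q) :
    (∫⁻ x in HuangLiDomain α, ENNReal.ofReal (‖x.1 ^ p * x.2 ^ q‖ ^ 2)) = ⊤ := by
  have hexp : 0 < ((p + q : ℕ) : ℝ) + 1 - α := by
    have : (2 : ℝ) ≤ (p + q : ℕ) := by exact_mod_cast hpq
    linarith
  have hlower : Tendsto (fun t : ℝ ↦
      ENNReal.ofReal (π ^ 2 * 6 ^ (-α) * t ^ (((p + q : ℕ) : ℝ) + 1 - α))) atTop (𝓝 ⊤) :=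
    ENNReal.tendsto_ofReal_atTop.comp
      ((tendsto_rpow_atTop hexp).const_mul_atTop (by positivity))
  refine top_unique (le_of_tendsto hlower ?_)
  filter_upwards [eventually_ge_atTop 1] with t ht
  exact le_setLIntegral_sq_norm_mul_pow_huangLiDomain (by linarith) ht p q
end

section
/- For each multi-index α ∈ ℕ₀ⁿ and each q ∈ ℕ₀, the monomial z^α w^q is square-integrable on the Hartogs domain D = {(z,w) ∈ ℂⁿ × ℂ : |w|² < e^{−|z|²}}, and ∫_D |z^α w^q|² dV = π^{n+1} α! / (q+1)^{|α|+n+1}. -/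
/-!
Over a point `z ∈ ℂⁿ` the fibre of `D` is the disc `|w| < e^{-|z|²/2}`, on which
`∫ |w|^{2q} = π e^{-(q+1)|z|²} / (q+1)`. The remaining integral over `ℂⁿ` splits into `n`
one-variable Gaussian moments `∫_ℂ |z|^{2k} e^{-c|z|²} = π k! / c^{k+1}`. Slicing with Tonelli
in `ℝ≥0∞` gives the finiteness of the integral, hence integrability, together with its value.
-/

open MeasureTheory Real

/-- The Hartogs domain `D = {(z,w) ∈ ℂⁿ × ℂ : |w|² < e^{−|z|²}}`. -/
def HartogsDomain (n : ℕ) : Set ((Fin n → ℂ) × ℂ) :=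
  {p | ‖p.2‖ ^ 2 < Real.exp (-(∑ i, ‖p.1 i‖ ^ 2))}

open Set

theorem Complex.integral_norm_pow_mul_exp_neg_mul_sq {c : ℝ} (hc : 0 < c) (k : ℕ) :
    ∫ z : ℂ, ‖z‖ ^ (2 * k) * rexp (-c * ‖z‖ ^ 2) = π * k.factorial / c ^ (k + 1) := by
  have h := Complex.integral_rpow_mul_exp_neg_mul_rpow (p := (2 : ℕ)) (q := (2 * k : ℕ))
    (by norm_num) (by linarith [(Nat.cast_nonneg (2 * k) : (0 : ℝ) ≤ _)]) hc
  have hk : ((2 * k : ℕ) + 2 : ℝ) / (2 : ℕ) = k + 1 := by push_cast; ring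
  simp only [Real.rpow_natCast, neg_div, hk, Real.Gamma_nat_eq_factorial] at h
  rw [h, Real.rpow_neg hc.le, show (k : ℝ) + 1 = (k + 1 : ℕ) by push_cast; rfl, Real.rpow_natCast]
  field_simp
  norm_num

theorem Complex.integrable_norm_pow_mul_exp_neg_mul_sq {c : ℝ} (hc : 0 < c) (k : ℕ) :
    Integrable fun z : ℂ => ‖z‖ ^ (2 * k) * rexp (-c * ‖z‖ ^ 2) :=
  .of_integral_ne_zero <| by rw [integral_norm_pow_mul_exp_neg_mul_sq hc]; positivity

section Pi

variable {ι : Type*} [Fintype ι] {c : ℝ}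

theorem integrable_prod_norm_pow_mul_exp_neg_mul_sq (hc : 0 < c) (k : ι → ℕ) :
    Integrable fun z : ι → ℂ => ∏ i, ‖z i‖ ^ (2 * k i) * rexp (-c * ‖z i‖ ^ 2) :=
  Integrable.fintype_prod (f := fun i (x : ℂ) => ‖x‖ ^ (2 * k i) * rexp (-c * ‖x‖ ^ 2))
    fun i => Complex.integrable_norm_pow_mul_exp_neg_mul_sq hc (k i)

theorem integral_prod_norm_pow_mul_exp_neg_mul_sq (hc : 0 < c) (k : ι → ℕ) :
    ∫ z : ι → ℂ, ∏ i, ‖z i‖ ^ (2 * k i) * rexp (-c * ‖z i‖ ^ 2) =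
      π ^ Fintype.card ι * (∏ i, (k i).factorial) / c ^ (∑ i, k i + Fintype.card ι) := by
  rw [integral_fintype_prod_volume_eq_prod
    (fun i (x : ℂ) => ‖x‖ ^ (2 * k i) * rexp (-c * ‖x‖ ^ 2))]
  simp only [Complex.integral_norm_pow_mul_exp_neg_mul_sq hc, Finset.prod_div_distrib,
    Finset.prod_mul_distrib, Finset.prod_const, Finset.prod_pow_eq_pow_sum,
    Finset.sum_add_distrib, Finset.sum_const, Finset.card_univ, smul_eq_mul, mul_one]
  push_cast
  rfl

end Pi

theorem integral_ball_norm_pow (q : ℕ) {R : ℝ} (hR : 0 ≤ R) :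
    ∫ w in Metric.ball (0 : ℂ) R, ‖w‖ ^ (2 * q) = π * R ^ (2 * q + 2) / (q + 1) := by
  have hpolar :=
    integral_fun_norm_addHaar (volume : Measure ℂ) ((Iio R).indicator fun r => r ^ (2 * q))
  simp only [Complex.finrank_real_complex, Measure.real, Complex.volume_ball, ENNReal.ofReal_one,
    one_pow, one_mul, ENNReal.coe_toReal, NNReal.coe_real_pi, smul_eq_mul, nsmul_eq_mul] at hpolar
  have hradial : ∫ y in Ioi (0 : ℝ), y ^ (2 - 1) * (Iio R).indicator (fun r => r ^ (2 * q)) y =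
      ∫ y in (0 : ℝ)..R, y ^ (2 * q + 1) := by
    rw [intervalIntegral.integral_of_le hR, integral_Ioc_eq_integral_Ioo,
      ← integral_indicator measurableSet_Ioo, ← integral_indicator measurableSet_Ioi]
    congr with y
    by_cases h0 : 0 < y <;> by_cases h1 : y < R <;> simp [indicator, h0, h1, pow_succ]
    ring
  rw [← integral_indicator measurableSet_ball]
  convert hpolar using 1
  · congr with w
    simp [indicator]
  rw [hradial, integral_pow, zero_pow (by omega), sub_zero]
  push_cast
  field_simp
  ring

theorem setLIntegral_norm_snd_lt_mul_norm_pow {X : Type*} [MeasurableSpace X] {μ : Measure X}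
    [SFinite μ] {g R : X → ℝ} (hg : Measurable g) (hR : Measurable R) (hg0 : 0 ≤ g)
    (hR0 : 0 ≤ R) (q : ℕ) :
    ∫⁻ p in {p : X × ℂ | ‖p.2‖ < R p.1}, ENNReal.ofReal (g p.1 * ‖p.2‖ ^ (2 * q)) ∂μ.prod volume
      = ∫⁻ x, ENNReal.ofReal (g x * (π * R x ^ (2 * q + 2) / (q + 1))) ∂μ := by
  have hmeas : MeasurableSet {p : X × ℂ | ‖p.2‖ < R p.1} :=
    measurableSet_lt (by fun_prop) (by fun_prop)
  rw [← lintegral_indicator hmeas,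
    lintegral_prod _ ((Measurable.indicator (by fun_prop) hmeas).aemeasurable)]
  refine lintegral_congr fun x => ?_
  have hint : IntegrableOn (fun w : ℂ => ‖w‖ ^ (2 * q)) (Metric.ball 0 (R x)) :=
    ((continuous_norm.pow _).continuousOn.integrableOn_compact
      (isCompact_closedBall 0 (R x))).mono_set Metric.ball_subset_closedBall
  calc ∫⁻ w, {p : X × ℂ | ‖p.2‖ < R p.1}.indicator
          (fun p => ENNReal.ofReal (g p.1 * ‖p.2‖ ^ (2 * q))) (x, w)
      = ∫⁻ w in Metric.ball (0 : ℂ) (R x),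
          ENNReal.ofReal (g x) * ENNReal.ofReal (‖w‖ ^ (2 * q)) := by
        rw [← lintegral_indicator measurableSet_ball]
        congr with w
        simp [indicator, ENNReal.ofReal_mul (hg0 x)]
    _ = _ := by
        rw [lintegral_const_mul _ (by fun_prop), ← ofReal_integral_eq_lintegral_ofReal hint
          (.of_forall fun w => by positivity), integral_ball_norm_pow q (hR0 x),
          ← ENNReal.ofReal_mul (hg0 x)]

theorem integrable_and_integral_eq_of_lintegral_ofReal_eq {X : Type*} [MeasurableSpace X]
    {μ : Measure X} {f : X → ℝ} (hf : AEStronglyMeasurable f μ) (hf0 : 0 ≤ᵐ[μ] f) {a : ℝ}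
    (ha : 0 ≤ a) (h : ∫⁻ x, ENNReal.ofReal (f x) ∂μ = ENNReal.ofReal a) :
    Integrable f μ ∧ ∫ x, f x ∂μ = a :=
  ⟨⟨hf, (hasFiniteIntegral_iff_ofReal hf0).2 (h ▸ ENNReal.ofReal_lt_top)⟩,
    by rw [integral_eq_lintegral_of_nonneg_ae hf0 hf, h, ENNReal.toReal_ofReal ha]⟩

theorem hartogsDomain_eq (n : ℕ) :
    HartogsDomain n = {p | ‖p.2‖ < rexp (-(∑ i, ‖p.1 i‖ ^ 2) / 2)} := by
  ext p
  simp only [HartogsDomain, mem_ofPred_eq, exp_half, Real.lt_sqrt (norm_nonneg _)]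

/-- Each monomial `z^α w^q` is square integrable on the Hartogs domain, with
`∫_D |z^α w^q|² dV = π^{n+1} α! / (q+1)^{|α|+n+1}`. -/
theorem stmt5 (n : ℕ) (α : Fin n → ℕ) (q : ℕ) :
    IntegrableOn
      (fun p : (Fin n → ℂ) × ℂ => ‖(∏ i, p.1 i ^ α i) * p.2 ^ q‖ ^ 2)
      (HartogsDomain n) volume ∧
    (∫ p in HartogsDomain n, ‖(∏ i, p.1 i ^ α i) * p.2 ^ q‖ ^ 2) =
      π ^ (n + 1) * (∏ i, Nat.factorial (α i)) / (q + 1) ^ ((∑ i, α i) + n + 1) := by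
  set c : ℝ := q + 1
  have hc : 0 < c := by positivity
  set g : (Fin n → ℂ) → ℝ := fun z => ∏ i, ‖z i‖ ^ (2 * α i)
  have hsplit (p : (Fin n → ℂ) × ℂ) :
      ‖(∏ i, p.1 i ^ α i) * p.2 ^ q‖ ^ 2 = g p.1 * ‖p.2‖ ^ (2 * q) := by
    simp only [g, norm_mul, norm_prod, norm_pow, mul_pow, ← Finset.prod_pow, pow_mul']
  have hslice (z : Fin n → ℂ) :
      g z * (π * rexp (-(∑ i, ‖z i‖ ^ 2) / 2) ^ (2 * q + 2) / c) =
        π / c * ∏ i, ‖z i‖ ^ (2 * α i) * rexp (-c * ‖z i‖ ^ 2) := by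
    have hexp : ((2 * q + 2 : ℕ) : ℝ) * (-(∑ i, ‖z i‖ ^ 2) / 2) = ∑ i, -c * ‖z i‖ ^ 2 := by
      rw [← Finset.mul_sum]; push_cast; ring
    rw [← Real.exp_nat_mul, hexp, Real.exp_sum, Finset.prod_mul_distrib]
    ring
  refine integrable_and_integral_eq_of_lintegral_ofReal_eq (by fun_prop)
    (.of_forall fun p => by positivity) (by positivity) ?_
  calc ∫⁻ p in HartogsDomain n, ENNReal.ofReal (‖(∏ i, p.1 i ^ α i) * p.2 ^ q‖ ^ 2)
      = ∫⁻ z : Fin n → ℂ,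
          ENNReal.ofReal (π / c * ∏ i, ‖z i‖ ^ (2 * α i) * rexp (-c * ‖z i‖ ^ 2)) := by
        simp_rw [hsplit, hartogsDomain_eq, Measure.volume_eq_prod]
        refine (setLIntegral_norm_snd_lt_mul_norm_pow (g := g)
          (R := fun z => rexp (-(∑ i, ‖z i‖ ^ 2) / 2)) (by fun_prop) (by fun_prop)
          (fun z => by positivity) (fun z => by positivity) q).trans ?_
        exact lintegral_congr fun z => congrArg ENNReal.ofReal (hslice z)
    _ = ENNReal.ofReal (π / c * (π ^ n * (∏ i, (α i).factorial) / c ^ (∑ i, α i + n))) := by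
        rw [← ofReal_integral_eq_lintegral_ofReal
          ((integrable_prod_norm_pow_mul_exp_neg_mul_sq hc α).const_mul _)
          (.of_forall fun z => by positivity), integral_const_mul,
          integral_prod_norm_pow_mul_exp_neg_mul_sq hc α, Fintype.card_fin]
    _ = _ := by
        congr 1
        field_simp
        ring
end

section
/- Let D ⊆ ℂⁿ be open with 0 ∈ D and suppose the Bergman kernel of D satisfies K_D(z,w) = φ₁(z) · conj(φ₁(w)) · e^{⟨z,w⟩} for all z, w ∈ D, where φ₁ = K_D(·,0)/K_D(0,0)^{1/2} and φ₁(0) > 0. Then for every multi-index α, the function z ↦ z^α φ₁(z) belongs to A²(D). -/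
open MeasureTheory

/-- Membership in the Bergman space `A²(D)`: holomorphic and square integrable on `D`. -/
def MemA2 {n : ℕ} (D : Set (Fin n → ℂ)) (f : (Fin n → ℂ) → ℂ) : Prop :=
  DifferentiableOn ℂ f D ∧ IntegrableOn (fun z => ‖f z‖ ^ 2) D volume

/-- `φ₁ = K(·,0)/K(0,0)^{1/2}`. -/
noncomputable def bergPhi {n : ℕ} (K : (Fin n → ℂ) → (Fin n → ℂ) → ℂ)
    (z : Fin n → ℂ) : ℂ :=
  K z 0 / (Real.sqrt (K 0 0).re : ℂ)

/-! For every corner `w` of a small cube around `0` inside `D` on which `φ₁` does not vanish, the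
factorization gives `φ₁(z) e^{⟨z,w⟩} = K(z,w) / conj φ₁(w) ∈ A²(D)`. Taking the corner whose
coordinates have the signs of those of `z` makes `|e^{⟨z,w⟩}| = e^{ε Σⱼ (|Re zⱼ| + |Im zⱼ|)}`, which
dominates `|z^α|` up to a constant; so `|z^α φ₁|` is bounded by a finite sum of elements of `A²(D)`. -/

open Complex ComplexConjugate

namespace MemA2

variable {n : ℕ} {D : Set (Fin n → ℂ)} {f g : (Fin n → ℂ) → ℂ}

theorem iff_memLp (hD : MeasurableSet D) :
    MemA2 D f ↔ DifferentiableOn ℂ f D ∧ MemLp f 2 (volume.restrict D) := by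
  refine and_congr_right fun hf => (memLp_two_iff_integrable_sq_norm ?_).symm
  exact hf.continuousOn.aestronglyMeasurable hD

theorem const_mul (hf : MemA2 D f) (c : ℂ) : MemA2 D (fun z => c * f z) :=
  ⟨hf.1.const_mul c, by simp only [norm_mul, mul_pow]; exact hf.2.const_mul _⟩

theorem congr (hD : MeasurableSet D) (hf : MemA2 D f) (h : Set.EqOn g f D) : MemA2 D g :=
  ⟨hf.1.congr h, hf.2.congr_fun (fun z hz => by simp only [h hz]) hD⟩

theorem of_norm_le_mul_sum {ι : Type*} (hD : MeasurableSet D) (t : Finset ι)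
    {G : ι → (Fin n → ℂ) → ℂ} (hG : ∀ i ∈ t, MemA2 D (G i)) (hf : DifferentiableOn ℂ f D)
    (C : ℝ) (hle : ∀ z ∈ D, ‖f z‖ ≤ C * ∑ i ∈ t, ‖G i z‖) : MemA2 D f := by
  have hsum : MemLp (fun z => C * ∑ i ∈ t, ‖G i z‖) 2 (volume.restrict D) :=
    (memLp_finsetSum t fun i hi => (((iff_memLp hD).1 (hG i hi)).2.norm)).const_mul C
  refine (iff_memLp hD).2 ⟨hf, hsum.of_le (hf.continuousOn.aestronglyMeasurable hD) ?_⟩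
  filter_upwards [ae_restrict_mem hD] with z hz
  exact (hle z hz).trans (le_abs_self _)

end MemA2

theorem pow_le_factorial_div_pow_mul_exp {ε t : ℝ} (hε : 0 < ε) (ht : 0 ≤ t) (m : ℕ) :
    t ^ m ≤ m.factorial / ε ^ m * Real.exp (ε * t) := by
  have h := Real.pow_div_factorial_le_exp (x := ε * t) (mul_nonneg hε.le ht) m
  rw [mul_pow, div_le_iff₀ (by positivity)] at h
  rw [div_mul_eq_mul_div, le_div_iff₀ (by positivity)]
  linarith

theorem norm_prod_pow_le_mul_exp {ι : Type*} [Fintype ι] {ε : ℝ} (hε : 0 < ε) (z : ι → ℂ)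
    (α : ι → ℕ) :
    ‖∏ i, z i ^ α i‖ ≤
      (∏ i, (α i).factorial / ε ^ α i) * Real.exp (ε * ∑ i, (|(z i).re| + |(z i).im|)) := by
  rw [norm_prod, Finset.mul_sum, Real.exp_sum, ← Finset.prod_mul_distrib]
  refine Finset.prod_le_prod (fun i _ => by positivity) fun i _ => ?_
  calc ‖z i ^ α i‖ ≤ (|(z i).re| + |(z i).im|) ^ α i := by
        rw [norm_pow]
        exact pow_le_pow_left₀ (norm_nonneg _) (norm_le_abs_re_add_abs_im _) _
    _ ≤ _ := pow_le_factorial_div_pow_mul_exp hε (by positivity) _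

/-- The complex number whose real and imaginary parts are the given signs. -/
def signCorner (s : SignType × SignType) : ℂ := ⟨s.1, s.2⟩

theorem norm_signCorner_le (s : SignType × SignType) : ‖signCorner s‖ ≤ 2 := by
  have h (a : SignType) : |(a : ℝ)| ≤ 1 := by rcases a with _ | _ | _ <;> simp
  exact (norm_le_abs_re_add_abs_im _).trans ((add_le_add (h s.1) (h s.2)).trans (by norm_num))

theorem re_mul_conj_signCorner_sign (z : ℂ) :
    (z * conj (signCorner (SignType.sign z.re, SignType.sign z.im))).re = |z.re| + |z.im| := by
  simp [signCorner]

def cubeCorner {ι : Type*} (ε : ℝ) (s : ι → SignType × SignType) : ι → ℂ :=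
  fun j => ε * signCorner (s j)

theorem norm_cubeCorner_le {ι : Type*} [Fintype ι] {ε : ℝ} (hε : 0 ≤ ε)
    (s : ι → SignType × SignType) : ‖cubeCorner ε s‖ ≤ 2 * ε := by
  refine (pi_norm_le_iff_of_nonneg (by positivity)).2 fun j => ?_
  rw [cubeCorner, norm_mul, norm_real, Real.norm_of_nonneg hε]
  nlinarith [norm_signCorner_le (s j)]

theorem re_sum_mul_conj_cubeCorner_sign {ι : Type*} [Fintype ι] (ε : ℝ) (z : ι → ℂ) :
    (∑ j, z j *
        conj (cubeCorner ε (fun j => (SignType.sign (z j).re, SignType.sign (z j).im)) j)).re =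
      ε * ∑ j, (|(z j).re| + |(z j).im|) := by
  simp only [cubeCorner, re_sum, Finset.mul_sum, map_mul, conj_ofReal, mul_left_comm _ (ε : ℂ),
    re_ofReal_mul, re_mul_conj_signCorner_sign]

theorem memA2_prod_pow_mul_of_forall_memA2_mul_exp {n : ℕ} {D : Set (Fin n → ℂ)}
    (hD : MeasurableSet D) {φ : (Fin n → ℂ) → ℂ} (hφ : DifferentiableOn ℂ φ D) {ε : ℝ}
    (hε : 0 < ε)
    (hexp : ∀ s : Fin n → SignType × SignType,
      MemA2 D (fun z => φ z * exp (∑ j, z j * conj (cubeCorner ε s j))))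
    (α : Fin n → ℕ) :
    MemA2 D (fun z => (∏ i, z i ^ α i) * φ z) := by
  have hmono : Differentiable ℂ (fun z : Fin n → ℂ => ∏ i, z i ^ α i) := by fun_prop
  refine MemA2.of_norm_le_mul_sum hD Finset.univ (fun s _ => hexp s)
    (hmono.differentiableOn.mul hφ) (∏ i, (α i).factorial / ε ^ α i) fun z _ => ?_
  let s₀ : Fin n → SignType × SignType :=
    fun j => (SignType.sign (z j).re, SignType.sign (z j).im)
  calc ‖(∏ i, z i ^ α i) * φ z‖ = ‖∏ i, z i ^ α i‖ * ‖φ z‖ := norm_mul _ _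
    _ ≤ (∏ i, (α i).factorial / ε ^ α i) * Real.exp (ε * ∑ j, (|(z j).re| + |(z j).im|)) *
        ‖φ z‖ := mul_le_mul_of_nonneg_right (norm_prod_pow_le_mul_exp hε z α) (norm_nonneg _)
    _ = (∏ i, (α i).factorial / ε ^ α i) *
        ‖φ z * exp (∑ j, z j * conj (cubeCorner ε s₀ j))‖ := by
      rw [norm_mul, norm_exp, re_sum_mul_conj_cubeCorner_sign]; ring
    _ ≤ _ := by
      gcongr
      exact Finset.single_le_sum
        (f := fun s => ‖φ z * exp (∑ j, z j * conj (cubeCorner ε s j))‖) (fun s _ => norm_nonneg _) (Finset.mem_univ s₀)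

theorem stmt9_general (n : ℕ) (D : Set (Fin n → ℂ)) (hD : IsOpen D) (h0 : (0 : Fin n → ℂ) ∈ D)
    (K : (Fin n → ℂ) → (Fin n → ℂ) → ℂ)
    (hker : ∀ w ∈ D, MemA2 D (fun z => K z w))
    (hpos0 : 0 < (bergPhi K 0).re ∧ (bergPhi K 0).im = 0)
    (hfact : ∀ z ∈ D, ∀ w ∈ D,
      K z w = bergPhi K z * starRingEnd ℂ (bergPhi K w) *
        Complex.exp (∑ j, z j * starRingEnd ℂ (w j)))
    (α : Fin n → ℕ) :
    MemA2 D (fun z => (∏ i, z i ^ α i) * bergPhi K z) := by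
  have hφ : DifferentiableOn ℂ (bergPhi K) D :=
    ((hker 0 h0).1.mul_const _).congr fun z _ => div_eq_mul_inv _ _
  have hφ0 : bergPhi K 0 ≠ 0 := fun h => by simp [h] at hpos0
  obtain ⟨r, hr, hball⟩ := Metric.mem_nhds_iff.mp (Filter.inter_mem (hD.mem_nhds h0)
    ((hφ.continuousOn.continuousAt (hD.mem_nhds h0)).eventually_ne hφ0))
  have hε : 0 < r / 3 := by positivity
  refine memA2_prod_pow_mul_of_forall_memA2_mul_exp hD.measurableSet hφ hε (fun s => ?_) α
  have hw : cubeCorner (r / 3) s ∈ Metric.ball 0 r := by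
    rw [mem_ball_zero_iff]
    linarith [norm_cubeCorner_le hε.le s]
  obtain ⟨hwD, hw0 : bergPhi K (cubeCorner (r / 3) s) ≠ 0⟩ := hball hw
  refine ((hker _ hwD).const_mul (conj (bergPhi K (cubeCorner (r / 3) s)))⁻¹).congr
    hD.measurableSet fun z hz => ?_
  rw [hfact z hz _ hwD]
  field_simp [(map_ne_zero _).2 hw0]

/-- If the Bergman kernel of an open set `D ⊆ ℂⁿ` containing `0` factors as
`K(z,w) = φ₁(z) conj(φ₁(w)) e^{⟨z,w⟩}` with `φ₁ = K(·,0)/K(0,0)^{1/2}`, `φ₁(0) > 0`,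
then `z^α φ₁ ∈ A²(D)` for every multi-index `α`. -/
theorem stmt9 (n : ℕ) (D : Set (Fin n → ℂ)) (hD : IsOpen D) (h0 : (0 : Fin n → ℂ) ∈ D)
    (K : (Fin n → ℂ) → (Fin n → ℂ) → ℂ)
    (hherm : ∀ z w, K z w = starRingEnd ℂ (K w z))
    (hker : ∀ w ∈ D, MemA2 D (fun z => K z w))
    (hrepr : ∀ f, MemA2 D f → ∀ z ∈ D, f z = ∫ w in D, K z w * f w)
    (hpos0 : 0 < (bergPhi K 0).re ∧ (bergPhi K 0).im = 0)
    (hfact : ∀ z ∈ D, ∀ w ∈ D,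
      K z w = bergPhi K z * starRingEnd ℂ (bergPhi K w) *
        Complex.exp (∑ j, z j * starRingEnd ℂ (w j)))
    (α : Fin n → ℕ) :
    MemA2 D (fun z => (∏ i, z i ^ α i) * bergPhi K z) :=
  stmt9_general n D hD h0 K hker hpos0 hfact α
end

section
/- On the diagonal of the Hartogs domain D = {(z,w) ∈ ℂⁿ × ℂ : |w|² < e^{−|z|²}}, the Bergman kernel satisfies K((z,0),(z,0)) = e^{|z|²}/π^{n+1} for all z ∈ ℂⁿ; consequently the restriction of the Bergman metric of D to ℂⁿ × {0} is the Euclidean metric i∂∂̄|z|². -/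
open Real

/-! At `w = 0` only the terms with `q = 0` survive, and those are, up to the factor `π^{-(n+1)}`,
the terms of the product over `i` of the exponential series of `‖zᵢ‖²`; the product of these
series is `e^{|z|²}`, and the formula for the logarithm follows. -/

theorem hasSum_fin_prod_of_nonneg {β : Type*} {n : ℕ} {f : Fin n → β → ℝ} {s : Fin n → ℝ}
    (hf : ∀ i b, 0 ≤ f i b) (hs : ∀ i, HasSum (f i) (s i)) :
    HasSum (fun b : Fin n → β => ∏ i, f i (b i)) (∏ i, s i) := by
  induction n with
  | zero => simp
  | succ n ih =>
    have htail : HasSum (fun b : Fin n → β => ∏ i : Fin n, f i.succ (b i))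
        (∏ i : Fin n, s i.succ) :=
      ih (fun i b => hf i.succ b) (fun i => hs i.succ)
    have hhead_nonneg : 0 ≤ f 0 := hf 0
    have htail_nonneg : 0 ≤ fun b : Fin n → β => ∏ i : Fin n, f i.succ (b i) :=
      fun b => Finset.prod_nonneg fun i _ => hf i.succ (b i)
    have hsum := (hs 0).summable.mul_of_nonneg htail.summable hhead_nonneg htail_nonneg
    have hprod := (hs 0).mul htail hsum
    rw [Fin.prod_univ_succ]
    refine (((Fin.consEquiv fun _ => β).symm.hasSum_iff).2 hprod).congr_fun fun b => ?_
    rw [Fin.prod_univ_succ]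
    rfl

theorem Real.hasSum_pow_div_factorial (x : ℝ) :
    HasSum (fun k : ℕ => x ^ k / k.factorial) (exp x) := by
  rw [exp_eq_exp_ℝ]
  exact NormedSpace.expSeries_div_hasSum_exp x

theorem hasSum_prod_pow_div_factorial {n : ℕ} {x : Fin n → ℝ} (hx : ∀ i, 0 ≤ x i) :
    HasSum (fun k : Fin n → ℕ => ∏ i, x i ^ k i / (k i).factorial) (exp (∑ i, x i)) := by
  have hterm_nonneg : ∀ i (k : ℕ), 0 ≤ x i ^ k / k.factorial := fun i k => by
    have := hx i
    positivity
  rw [exp_sum]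
  -- elaborated without the expected type: unifying `?f i (k i)` with the factorial term diverges
  exact (hasSum_fin_prod_of_nonneg hterm_nonneg fun i => hasSum_pow_div_factorial (x i) :)

theorem hasSum_prod_iff_of_ne_snd {α β M : Type*} [AddCommMonoid M] [TopologicalSpace M]
    {f : α × β → M} {b₀ : β} (hf : ∀ a b, b ≠ b₀ → f (a, b) = 0) {s : M} :
    HasSum f s ↔ HasSum (fun a => f (a, b₀)) s := by
  refine (Function.Injective.hasSum_iff (g := fun a => (a, b₀))
    (fun a a' h => (Prod.mk.inj h).1) ?_).symm
  rintro ⟨a, b⟩ hab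
  exact hf a b fun h => hab ⟨a, by rw [h]⟩

/-- On the slice `w = 0`, the Bergman kernel of the Hartogs domain
`D = {(z,w) ∈ ℂⁿ × ℂ : |w|² < e^{−|z|²}}` (computed from the orthogonal monomial
basis with `‖z^α w^q‖² = π^{n+1} α!/(q+1)^{|α|+n+1}`) equals `e^{|z|²}/π^{n+1}`;
consequently `log K((z,0),(z,0)) = |z|² − (n+1) log π`, so the Bergman metric
restricted to `ℂⁿ × {0}` is the Euclidean metric `i∂∂̄|z|²`. -/
theorem stmt17 (n : ℕ) (z : Fin n → ℂ) :
    (∑' aq : (Fin n → ℕ) × ℕ,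
        (((aq.2 : ℝ) + 1) ^ ((∑ i, aq.1 i) + n + 1) /
            (π ^ (n + 1) * ∏ i, (Nat.factorial (aq.1 i) : ℝ))) *
          (∏ i, ‖z i‖ ^ (2 * aq.1 i)) * ‖(0 : ℂ)‖ ^ (2 * aq.2)) =
      Real.exp (∑ i, ‖z i‖ ^ 2) / π ^ (n + 1) ∧
    Real.log (Real.exp (∑ i, ‖z i‖ ^ 2) / π ^ (n + 1)) =
      (∑ i, ‖z i‖ ^ 2) - (n + 1) * Real.log π := by
  refine ⟨HasSum.tsum_eq ?_, ?_⟩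
  · rw [hasSum_prod_iff_of_ne_snd (b₀ := 0) fun _ q hq => by simp [hq]]
    refine ((hasSum_prod_pow_div_factorial fun i => sq_nonneg ‖z i‖).div_const
      (π ^ (n + 1))).congr_fun fun k => ?_
    simp only [CharP.cast_eq_zero, zero_add, one_pow, div_eq_mul_inv, mul_inv_rev, one_mul,
      pow_mul, norm_zero, mul_zero, pow_zero, mul_one, Finset.prod_mul_distrib,
      Finset.prod_inv_distrib]
    ring
  · rw [log_div (exp_ne_zero _) (pow_ne_zero _ pi_ne_zero), log_exp, log_pow]
    push_cast
    ring
end
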